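/- arXiv:2411.10859 — 4 statements merged into one kernel-verified Lean document; each statement's English description precedes it below -/
import Mathlib

section
/- Let 1 < n < b be natural numbers and let (d_k, d_{k-1}, ..., d_0)_b be an (n,b,σ)-permutiple. For 0 ≤ j ≤ k+1 set S_j = n·Σ_{i=0}^{j-1} d_{σ(i)}·b^i − Σ_{i=0}^{j-1} d_i·b^i. Then for every 0 ≤ j ≤ k+1 the power b^j divides S_j (so the j-th carry c_j := S_j / b^j is a well-defined integer, with c_0 = 0), and b·c_{j+1} − c_j = n·d_{σ(j)} − d_j for all 0 ≤ j ≤ k. -/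
/-- The integer `S_j = n·Σ_{i=0}^{j-1} d_{σ(i)}·b^i − Σ_{i=0}^{j-1} d_i·b^i`. -/
def permS (n b : ℕ) {k : ℕ} (d : Fin (k + 1) → ℕ) (σ : Equiv.Perm (Fin (k + 1)))
    (j : ℕ) : ℤ :=
  (n : ℤ) * ∑ i ∈ Finset.univ.filter (fun i : Fin (k + 1) => (i : ℕ) < j),
      (d (σ i) : ℤ) * (b : ℤ) ^ (i : ℕ)
    - ∑ i ∈ Finset.univ.filter (fun i : Fin (k + 1) => (i : ℕ) < j),
      (d i : ℤ) * (b : ℤ) ^ (i : ℕ)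

/-- The `j`-th carry `c_j = S_j / b^j`. -/
def carry (n b : ℕ) {k : ℕ} (d : Fin (k + 1) → ℕ) (σ : Equiv.Perm (Fin (k + 1)))
    (j : ℕ) : ℤ :=
  permS n b d σ j / (b : ℤ) ^ j

/-!
`S_{j+1} - S_j = (n d_{σ(j)} - d_j) b^j` and `S_{k+1} = 0` by the permutiple equation, so
descending from `j = k + 1` each `S_j` is divisible by `b^j`; dividing the difference
equation by `b^j` then gives the carry recurrence.
-/

theorem pow_dvd_of_pow_dvd_sub_of_pow_dvd {R : Type*} [CommRing R] {S : ℕ → R} {b : R} {m : ℕ}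
    (hstep : ∀ j < m, b ^ j ∣ S (j + 1) - S j) (hm : b ^ m ∣ S m) :
    ∀ j ≤ m, b ^ j ∣ S j := by
  intro j hj
  induction hj using Nat.decreasingInduction with
  | self => exact hm
  | of_succ j hjm ih =>
    have hsucc : b ^ j ∣ S (j + 1) := (pow_dvd_pow b j.le_succ).trans ih
    simpa using dvd_sub hsucc (hstep j hjm)

theorem mul_ediv_pow_succ_sub_ediv_pow {b x y t : ℤ} {j : ℕ} (hb : b ≠ 0)
    (hx : b ^ j ∣ x) (hy : b ^ (j + 1) ∣ y) (hxy : y = x + t * b ^ j) :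
    b * (y / b ^ (j + 1)) - x / b ^ j = t := by
  obtain ⟨c, rfl⟩ := hx
  obtain ⟨c', rfl⟩ := hy
  have hbj : b ^ j ≠ 0 := pow_ne_zero j hb
  rw [Int.mul_ediv_cancel_left _ hbj, Int.mul_ediv_cancel_left _ (pow_ne_zero _ hb)]
  apply mul_left_cancel₀ hbj
  linear_combination hxy

section permS

variable (n b : ℕ) {k : ℕ} (d : Fin (k + 1) → ℕ) (σ : Equiv.Perm (Fin (k + 1)))

theorem permS_zero : permS n b d σ 0 = 0 := by
  simp [permS]

theorem permS_succ (j : ℕ) (hj : j < k + 1) :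
    permS n b d σ (j + 1)
      = permS n b d σ j + ((n : ℤ) * d (σ ⟨j, hj⟩) - d ⟨j, hj⟩) * (b : ℤ) ^ j := by
  have hset : Finset.univ.filter (fun i : Fin (k + 1) => (i : ℕ) < j + 1)
      = insert ⟨j, hj⟩ (Finset.univ.filter (fun i : Fin (k + 1) => (i : ℕ) < j)) := by
    ext i
    simp only [Finset.mem_filter, Finset.mem_univ, true_and, Finset.mem_insert, Fin.ext_iff]
    omega
  have hnot : (⟨j, hj⟩ : Fin (k + 1)) ∉
      Finset.univ.filter (fun i : Fin (k + 1) => (i : ℕ) < j) := by simp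
  rw [permS, permS, hset, Finset.sum_insert hnot, Finset.sum_insert hnot]
  ring

variable {n b d σ}

theorem permS_last (hperm : ∑ j : Fin (k + 1), d j * b ^ (j : ℕ)
      = n * ∑ j : Fin (k + 1), d (σ j) * b ^ (j : ℕ)) :
    permS n b d σ (k + 1) = 0 := by
  have hall : Finset.univ.filter (fun i : Fin (k + 1) => (i : ℕ) < k + 1) = Finset.univ :=
    Finset.filter_true_of_mem fun i _ => i.isLt
  rw [permS, hall, sub_eq_zero]
  exact_mod_cast hperm.symm

end permS

theorem carries_well_defined_and_recurrence_general
    (n b k : ℕ) (hnb : n < b)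
    (d : Fin (k + 1) → ℕ)
    (σ : Equiv.Perm (Fin (k + 1)))
    (hperm : ∑ j : Fin (k + 1), d j * b ^ (j : ℕ)
      = n * ∑ j : Fin (k + 1), d (σ j) * b ^ (j : ℕ)) :
    (∀ j ≤ k + 1, (b : ℤ) ^ j ∣ permS n b d σ j) ∧
    carry n b d σ 0 = 0 ∧
    (∀ j, (hj : j ≤ k) →
      (b : ℤ) * carry n b d σ (j + 1) - carry n b d σ j
        = (n : ℤ) * d (σ ⟨j, Nat.lt_succ_of_le hj⟩) - d ⟨j, Nat.lt_succ_of_le hj⟩) := by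
  have hb : (b : ℤ) ≠ 0 := by omega
  have hdvd : ∀ j ≤ k + 1, (b : ℤ) ^ j ∣ permS n b d σ j := by
    refine pow_dvd_of_pow_dvd_sub_of_pow_dvd (fun j hj => ?_) (by simp [permS_last hperm])
    rw [permS_succ n b d σ j hj, add_sub_cancel_left]
    exact dvd_mul_left _ _
  refine ⟨hdvd, by simp [carry, permS_zero], fun j hj => ?_⟩
  exact mul_ediv_pow_succ_sub_ediv_pow hb (hdvd j (by omega)) (hdvd (j + 1) (by omega))
    (permS_succ n b d σ j _)

theorem carries_well_defined_and_recurrence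
    (n b k : ℕ) (hn : 1 < n) (hnb : n < b)
    (d : Fin (k + 1) → ℕ) (hd : ∀ j, d j < b)
    (σ : Equiv.Perm (Fin (k + 1)))
    (hperm : ∑ j : Fin (k + 1), d j * b ^ (j : ℕ)
      = n * ∑ j : Fin (k + 1), d (σ j) * b ^ (j : ℕ)) :
    (∀ j ≤ k + 1, (b : ℤ) ^ j ∣ permS n b d σ j) ∧
    carry n b d σ 0 = 0 ∧
    (∀ j, (hj : j ≤ k) →
      (b : ℤ) * carry n b d σ (j + 1) - carry n b d σ j
        = (n : ℤ) * d (σ ⟨j, Nat.lt_succ_of_le hj⟩) - d ⟨j, Nat.lt_succ_of_le hj⟩) :=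
  carries_well_defined_and_recurrence_general n b k hnb d σ hperm
end

section
/- Let 1 < n < b be natural numbers. For every fixed digit d_1 with 0 ≤ d_1 < b, the number of digits d_2 with 0 ≤ d_2 < b satisfying (d_1 + (b − n)·d_2) mod b ≤ n − 1 is exactly n. In other words, every vertex of the (n,b)-mother graph has outdegree n. -/
/-!
The residue `(d₁ + (b - n) d₂) mod b` is `r < n` exactly when `d₁ + k b = n d₂ + r` for some `k`,
i.e. when `d₂ = ⌊(d₁ + k b) / n⌋`. Such a `d₂` lies below `b` iff `k < n`, and since `b ≥ n` the
values `⌊(d₁ + k b) / n⌋` strictly increase with `k`, so the out-neighbours of `d₁` are `n` distinct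
digits.
-/

namespace MotherGraph

variable {n b d₁ : ℕ}

theorem add_mul_div_lt_iff (hn : 0 < n) (hd₁ : d₁ < b) {k : ℕ} :
    (d₁ + k * b) / n < b ↔ k < n := by
  rw [Nat.div_lt_iff_lt_mul hn]
  constructor
  · intro h
    by_contra! hk
    nlinarith [Nat.mul_le_mul_right b hk]
  · intro hk
    nlinarith [Nat.mul_le_mul_right b (Nat.succ_le_of_lt hk)]

theorem strictMono_add_mul_div (hn : 0 < n) (hnb : n ≤ b) :
    StrictMono fun k => (d₁ + k * b) / n := by
  refine strictMono_nat_of_lt_succ fun k => ?_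
  calc (d₁ + k * b) / n < (d₁ + k * b + n) / n := by
        rw [Nat.add_div_right _ hn]; exact Nat.lt_succ_self _
    _ ≤ (d₁ + (k + 1) * b) / n := Nat.div_le_div_right (by rw [add_one_mul]; omega)

theorem add_tsub_mul_mod_lt_iff (hn : 0 < n) (hnb : n ≤ b) (hd₁ : d₁ < b) {d₂ : ℕ} :
    (d₁ + (b - n) * d₂) % b < n ↔ ∃ k, (d₁ + k * b) / n = d₂ := by
  obtain ⟨c, rfl⟩ := Nat.exists_eq_add_of_le hnb
  rw [Nat.add_sub_cancel_left]
  constructor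
  · intro hr
    have hdiv := Nat.div_add_mod (d₁ + c * d₂) (n + c)
    set q := (d₁ + c * d₂) / (n + c)
    set r := (d₁ + c * d₂) % (n + c)
    have hq : q ≤ d₂ := by nlinarith
    obtain ⟨k, hk⟩ := Nat.exists_eq_add_of_le hq
    have hdecomp : d₁ + k * (n + c) = n * d₂ + r := by rw [hk] at hdiv ⊢; nlinarith
    exact ⟨k, by rw [hdecomp, Nat.mul_add_div hn, Nat.div_eq_of_lt hr, add_zero]⟩
  · rintro ⟨k, rfl⟩
    have hdiv := Nat.div_add_mod (d₁ + k * (n + c)) n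
    have hrn := Nat.mod_lt (d₁ + k * (n + c)) hn
    set d₂ := (d₁ + k * (n + c)) / n
    set r := (d₁ + k * (n + c)) % n
    have hk : k ≤ d₂ := by nlinarith
    obtain ⟨q, hq⟩ := Nat.exists_eq_add_of_le hk
    have hdecomp : d₁ + c * d₂ = (n + c) * q + r := by rw [hq] at hdiv ⊢; nlinarith
    rw [hdecomp, Nat.mul_add_mod, Nat.mod_eq_of_lt (by omega)]
    exact hrn

end MotherGraph

open MotherGraph in
theorem mother_graph_outdegree
    (n b : ℕ) (hn : 1 < n) (hnb : n < b) :
    ∀ d₁ < b,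
      ((Finset.range b).filter
        (fun d₂ => (d₁ + (b - n) * d₂) % b ≤ n - 1)).card = n := by
  intro d₁ hd₁
  have hn₀ : 0 < n := by omega
  have hout : ((Finset.range b).filter
        (fun d₂ => (d₁ + (b - n) * d₂) % b ≤ n - 1)) =
      (Finset.range n).image fun k => (d₁ + k * b) / n := by
    ext d₂
    simp only [Finset.mem_filter, Finset.mem_range, Finset.mem_image, Nat.le_sub_one_iff_lt hn₀,
      add_tsub_mul_mod_lt_iff hn₀ hnb.le hd₁]
    constructor
    · rintro ⟨hd₂, k, rfl⟩
      exact ⟨k, (add_mul_div_lt_iff hn₀ hd₁).1 hd₂, rfl⟩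
    · rintro ⟨k, hk, rfl⟩
      exact ⟨(add_mul_div_lt_iff hn₀ hd₁).2 hk, k, rfl⟩
  rw [hout, Finset.card_image_of_injective _ (strictMono_add_mul_div hn₀ hnb.le).injective,
    Finset.card_range]
end

section
/- Suppose (d_k, ..., d_0)_b is an (n,b,σ)-permutiple, and suppose π_1, τ_1, π_2, τ_2 are permutations of {0, 1, ..., k} such that (d_{π_1(k)}, ..., d_{π_1(0)})_b is an (n,b,τ_1)-permutiple, (d_{π_2(k)}, ..., d_{π_2(0)})_b is an (n,b,τ_2)-permutiple, and π_1 τ_1 π_1^{-1} = π_2 τ_2 π_2^{-1}. Then the two edge sets coincide: { (d_{π_1(j)}, d_{π_1(τ_1(j))}) : 0 ≤ j ≤ k } = { (d_{π_2(j)}, d_{π_2(τ_2(j))}) : 0 ≤ j ≤ k } as sets of ordered pairs. -/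
theorem Equiv.Perm.range_pair_apply_eq_range_pair_conj {ι α : Type*} (d : ι → α)
    (π τ : Equiv.Perm ι) :
    (Set.range fun j => (d (π j), d (π (τ j))))
      = Set.range fun i => (d i, d ((π * τ * π⁻¹) i)) := by
  rw [← π.surjective.range_comp (fun i => (d i, d ((π * τ * π⁻¹) i)))]
  simp [Function.comp_def]

theorem conjugate_permutiples_same_edges_general
    (k : ℕ)
    (d : Fin (k + 1) → ℕ)
    (π₁ τ₁ π₂ τ₂ : Equiv.Perm (Fin (k + 1)))
    (hconj : π₁ * τ₁ * π₁⁻¹ = π₂ * τ₂ * π₂⁻¹) :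
    (Set.range fun j : Fin (k + 1) => (d (π₁ j), d (π₁ (τ₁ j))))
      = Set.range fun j : Fin (k + 1) => (d (π₂ j), d (π₂ (τ₂ j))) := by
  rw [Equiv.Perm.range_pair_apply_eq_range_pair_conj, hconj,
    ← Equiv.Perm.range_pair_apply_eq_range_pair_conj]

theorem conjugate_permutiples_same_edges
    (n b k : ℕ) (hn : 1 < n) (hnb : n < b)
    (d : Fin (k + 1) → ℕ) (hd : ∀ j, d j < b)
    (σ π₁ τ₁ π₂ τ₂ : Equiv.Perm (Fin (k + 1)))
    (hσ : ∑ j : Fin (k + 1), d j * b ^ (j : ℕ)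
      = n * ∑ j : Fin (k + 1), d (σ j) * b ^ (j : ℕ))
    (h₁ : ∑ j : Fin (k + 1), d (π₁ j) * b ^ (j : ℕ)
      = n * ∑ j : Fin (k + 1), d (π₁ (τ₁ j)) * b ^ (j : ℕ))
    (h₂ : ∑ j : Fin (k + 1), d (π₂ j) * b ^ (j : ℕ)
      = n * ∑ j : Fin (k + 1), d (π₂ (τ₂ j)) * b ^ (j : ℕ))
    (hconj : π₁ * τ₁ * π₁⁻¹ = π₂ * τ₂ * π₂⁻¹) :
    (Set.range fun j : Fin (k + 1) => (d (π₁ j), d (π₁ (τ₁ j))))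
      = Set.range fun j : Fin (k + 1) => (d (π₂ j), d (π₂ (τ₂ j))) :=
  conjugate_permutiples_same_edges_general k d π₁ τ₁ π₂ τ₂ hconj
end

section
/- For every (n,b,σ)-permutiple (d_k, ..., d_0)_b there exists a cycle-preserving permutation σ̂ of {0, 1, ..., k} such that d_{σ̂(j)} = d_{σ(j)} for all 0 ≤ j ≤ k; in particular (d_k, ..., d_0)_b = n·(d_{σ̂(k)}, ..., d_{σ̂(0)})_b. Here σ̂ is cycle-preserving means: for every index j, if m ≥ 1 is the least natural number with σ̂^m(j) = j, then the digits d_j, d_{σ̂(j)}, ..., d_{σ̂^{m-1}(j)} are pairwise distinct. -/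
/-!
Induct on the number of pairs of indices lying in a common cycle of `σ`. If two distinct
indices `x`, `y` of one cycle carry the same digit, then `swap x y * σ` has the same digit
sequence `d ∘ (swap x y * σ) = d ∘ σ`, its cycles refine those of `σ`, and it separates `x`
from `y`, so it has fewer such pairs. The digit equation only depends on `d ∘ σ`, so it
transfers to the permutation finally obtained.
-/

/-- A permutation `σ` of the index set is cycle-preserving for the digit sequence `d` if
within every orbit of `σ` the corresponding digits are pairwise distinct: for every index
`j`, letting `m ≥ 1` be the least natural number with `σ^m j = j`, the digits
`d j, d (σ j), ..., d (σ^(m-1) j)` are pairwise distinct. -/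
def CyclePreserving {k : ℕ} (d : Fin (k + 1) → ℕ) (σ : Equiv.Perm (Fin (k + 1))) : Prop :=
  ∀ j : Fin (k + 1), ∀ a < Function.minimalPeriod σ j, ∀ c < Function.minimalPeriod σ j,
    a ≠ c → d ((σ ^ a) j) ≠ d ((σ ^ c) j)

namespace Equiv.Perm

variable {α : Type*}

theorem SameCycle.of_forall_sameCycle_apply {τ π : Perm α} (h : ∀ z, τ.SameCycle z (π z))
    {a b : α} (hab : π.SameCycle a b) : τ.SameCycle a b := by
  obtain ⟨i, rfl⟩ := hab
  induction i using Int.induction_on with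
  | zero => rfl
  | succ i ih =>
    rw [add_comm, zpow_add, zpow_one, mul_apply]
    exact ih.trans (h _)
  | pred i ih =>
    rw [sub_eq_neg_add, zpow_add, zpow_neg_one, mul_apply]
    set w := (π ^ (-i : ℤ)) a
    have hw : τ.SameCycle (π⁻¹ w) w := by simpa using h (π⁻¹ w)
    exact ih.trans hw.symm

section

variable [DecidableEq α]

theorem SameCycle.sameCycle_apply_swap_mul {τ : Perm α} {x y : α} (hxy : τ.SameCycle x y)
    (z : α) : τ.SameCycle z ((swap x y * τ) z) := by
  have hz : τ.SameCycle z (τ z) := ⟨1, by simp⟩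
  rw [mul_apply]
  rcases eq_or_ne (τ z) x with hx | hx
  · rw [hx, swap_apply_left]
    exact (hx ▸ hz).trans hxy
  rcases eq_or_ne (τ z) y with hy | hy
  · rw [hy, swap_apply_right]
    exact (hy ▸ hz).trans hxy.symm
  · rwa [swap_apply_of_ne_of_ne hx hy]

theorem SameCycle.of_swap_mul {τ : Perm α} {x y a b : α} (hxy : τ.SameCycle x y)
    (hab : (swap x y * τ).SameCycle a b) : τ.SameCycle a b :=
  hab.of_forall_sameCycle_apply hxy.sameCycle_apply_swap_mul

/-- If `y = τ^m x` with `m > 0` minimal, then `swap x y * τ` closes up the arc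
`x, τ x, …, τ^(m-1) x` into a cycle, which misses `y`. -/
theorem SameCycle.not_sameCycle_swap_mul [Finite α] {τ : Perm α} {x y : α}
    (hxy : τ.SameCycle x y) (hne : x ≠ y) : ¬(swap x y * τ).SameCycle x y := by
  have hex : ∃ m, 0 < m ∧ (τ ^ m) x = y := by
    obtain ⟨m, hm, -, hmy⟩ := hxy.exists_pow_eq''
    exact ⟨m, hm, hmy⟩
  classical
  set m := Nat.find hex
  obtain ⟨hm, hmy⟩ : 0 < m ∧ (τ ^ m) x = y := Nat.find_spec hex
  have hmin : ∀ j < m, 0 < j → (τ ^ j) x ≠ y := fun j hj hj0 h => Nat.find_min hex hj ⟨hj0, h⟩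
  set arc : Set α := (fun j => (τ ^ j) x) '' Set.Iio m
  have hy : y ∉ arc := by
    rintro ⟨j, hj, hjy⟩
    rcases Nat.eq_zero_or_pos j with rfl | hj0
    · exact hne hjy
    · exact hmin j hj hj0 hjy
  have hx0 : x ∈ arc := ⟨0, hm, by simp⟩
  have hmaps : Set.MapsTo (swap x y * τ) arc arc := by
    rintro _ ⟨j, hj, rfl⟩
    rw [mul_apply, ← mul_apply τ, ← pow_succ']
    rcases (Nat.succ_le_of_lt hj).eq_or_lt with hjm | hjm
    · rw [show j + 1 = m from hjm, hmy, swap_apply_right]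
      exact hx0
    have hx : (τ ^ (j + 1)) x ≠ x := fun h ↦ by
      refine hmin (m - (j + 1)) (by omega) (by omega) ?_
      rw [← h, ← mul_apply, ← pow_add, Nat.sub_add_cancel hjm.le, hmy]
    rw [swap_apply_of_ne_of_ne hx (hmin _ hjm j.succ_pos)]
    exact Set.mem_image_of_mem _ hjm
  intro h
  obtain ⟨i, -, hi⟩ := h.exists_pow_eq'
  exact hy (hi ▸ coe_pow _ i ▸ hmaps.iterate i hx0)

theorem ncard_sameCycle_swap_mul_lt [Finite α] {τ : Perm α} {x y : α}
    (hxy : τ.SameCycle x y) (hne : x ≠ y) :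
    {p : α × α | (swap x y * τ).SameCycle p.1 p.2}.ncard
      < {p : α × α | τ.SameCycle p.1 p.2}.ncard :=
  Set.ncard_lt_ncard
    ⟨fun _ hp ↦ hxy.of_swap_mul hp, fun h ↦ hxy.not_sameCycle_swap_mul hne (@h (x, y) hxy)⟩

end

variable {β : Type*}

def InjOnCycles (τ : Perm α) (d : α → β) : Prop :=
  ∀ ⦃x y⦄, τ.SameCycle x y → d x = d y → x = y

theorem exists_injOnCycles_apply_eq [Finite α] (d : α → β) (σ : Perm α) :
    ∃ τ : Perm α, τ.InjOnCycles d ∧ ∀ j, d (τ j) = d (σ j) := by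
  classical
  induction hN : {p : α × α | σ.SameCycle p.1 p.2}.ncard using Nat.strong_induction_on
    generalizing σ with
  | _ N ih =>
  by_cases hσ : σ.InjOnCycles d
  · exact ⟨σ, hσ, fun _ ↦ rfl⟩
  obtain ⟨x, y, hxy, hd, hne⟩ : ∃ x y, σ.SameCycle x y ∧ d x = d y ∧ x ≠ y := by
    simpa [InjOnCycles] using hσ
  obtain ⟨τ, hτ, hτd⟩ := ih _ (hN ▸ ncard_sameCycle_swap_mul_lt hxy hne) (swap x y * σ) rfl
  exact ⟨τ, hτ, fun j ↦ (hτd j).trans (apply_swap_eq_self hd (σ j))⟩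

end Equiv.Perm

open Equiv

theorem cyclePreserving_of_injOnCycles {k : ℕ} {d : Fin (k + 1) → ℕ} {τ : Perm (Fin (k + 1))}
    (hτ : τ.InjOnCycles d) : CyclePreserving d τ := by
  intro j a ha c hc hac hd
  refine hac (Function.iterate_injOn_Iio_minimalPeriod ha hc ?_)
  simp only [← Perm.coe_pow]
  exact hτ (by simp [Perm.SameCycle.refl]) hd

theorem exists_cycle_preserving_permutation_general
    (n b k : ℕ)
    (d : Fin (k + 1) → ℕ)
    (σ : Equiv.Perm (Fin (k + 1)))
    (hperm : ∑ j : Fin (k + 1), d j * b ^ (j : ℕ)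
      = n * ∑ j : Fin (k + 1), d (σ j) * b ^ (j : ℕ)) :
    ∃ σ' : Equiv.Perm (Fin (k + 1)), CyclePreserving d σ' ∧
      (∀ j, d (σ' j) = d (σ j)) ∧
      ∑ j : Fin (k + 1), d j * b ^ (j : ℕ)
        = n * ∑ j : Fin (k + 1), d (σ' j) * b ^ (j : ℕ) := by
  obtain ⟨τ, hτ, hτd⟩ := Perm.exists_injOnCycles_apply_eq d σ
  refine ⟨τ, cyclePreserving_of_injOnCycles hτ, hτd, ?_⟩
  simp only [hperm, hτd]

theorem exists_cycle_preserving_permutation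
    (n b k : ℕ) (hn : 1 < n) (hnb : n < b)
    (d : Fin (k + 1) → ℕ) (hd : ∀ j, d j < b)
    (σ : Equiv.Perm (Fin (k + 1)))
    (hperm : ∑ j : Fin (k + 1), d j * b ^ (j : ℕ)
      = n * ∑ j : Fin (k + 1), d (σ j) * b ^ (j : ℕ)) :
    ∃ σ' : Equiv.Perm (Fin (k + 1)), CyclePreserving d σ' ∧
      (∀ j, d (σ' j) = d (σ j)) ∧
      ∑ j : Fin (k + 1), d j * b ^ (j : ℕ)
        = n * ∑ j : Fin (k + 1), d (σ' j) * b ^ (j : ℕ) :=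
  exists_cycle_preserving_permutation_general n b k d σ hperm
end
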